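/- Let X be a complex Banach space and x* ∈ X* with ‖x*‖ = 1. Then the following are equivalent: (i) the only functional φ ∈ X*** with ‖φ‖ ≤ 1 and φ(i_X(x)) = x*(x) for all x ∈ X is φ = i_{X*}(x*) (i.e., x* has a unique norm-preserving extension to a functional on X**); (ii) the identity map on the closed unit ball of X*, viewed as a map from the relative weak-star topology to the relative weak topology, is continuous at the point x*. -/

import Mathlib

/-!
Write `j : X* → X***` for the canonical embedding and `r : X*** → X*` for restriction to `X ⊆ X**`,
so that `r ∘ j = id`. The weak topology of `X*` is induced by `j` from the weak-star topology of
`X***`, so (ii) is weak-star continuity of `j` on the unit ball `B` of `X*` at `x*`, while the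
norm-preserving extensions of `x*` are the points of the unit ball `K` of `X***` lying over `x*`.
By Banach–Alaoglu `K` is weak-star compact, and by Goldstine `j '' B` is weak-star dense in it.
If `j x*` is the only point of `K` over `x*`, every cluster point of `j` at `x*` lies over `x*` by
continuity of `r`, so compactness gives convergence. Conversely, a point of `K` over `x*` is a limit
of some `j b` with `b ∈ B`; then `b = r (j b) → x*`, hence `j b → j x*`.
-/

open NormedSpace

noncomputable section

set_option maxHeartbeats 1000000

/-- The transpose (dual map) of a continuous linear map between (semi)normed spaces:
`ctranspose f` sends a functional `g` to `g ∘ f`. -/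
def ctranspose {E F : Type*} [SeminormedAddCommGroup E] [NormedSpace ℂ E]
    [SeminormedAddCommGroup F] [NormedSpace ℂ F] (f : E →L[ℂ] F) :
    StrongDual ℂ F →L[ℂ] StrongDual ℂ E :=
  (ContinuousLinearMap.compL ℂ E F ℂ).flip f

/-- A bounded linear projection `P` is an L-projection if `‖z‖ = ‖P z‖ + ‖z - P z‖`
for all `z`. -/
def IsLProjection {Z : Type*} [SeminormedAddCommGroup Z] [NormedSpace ℂ Z]
    (P : Z →L[ℂ] Z) : Prop :=
  (∀ z, P (P z) = P z) ∧ ∀ z, ‖z‖ = ‖P z‖ + ‖z - P z‖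

open Filter Topology Metric Set

section LeftInverse

variable {α β : Type*} [TopologicalSpace α] [TopologicalSpace β]
  {j : α → β} {r : β → α} {s : Set α} {K : Set β} {a : α}

theorem continuousWithinAt_of_isCompact_of_unique_lift [T2Space α] (hr : Continuous r)
    (hrj : LeftInvOn r j s) (hK : IsCompact K) (hjK : MapsTo j s K)
    (huniq : ∀ y ∈ K, r y = a → y = j a) : ContinuousWithinAt j s a := by
  refine hK.tendsto_nhds_of_unique_mapClusterPt (eventually_nhdsWithin_of_forall hjK)
    fun y hyK hy => huniq y hyK ?_
  have hid : MapClusterPt (r y) (𝓝[s] a) id :=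
    (hy.continuousAt_comp hr.continuousAt).congrFun
      (eventually_nhdsWithin_of_forall fun x hx => hrj hx)
  exact eq_of_nhds_neBot ((mapClusterPt_id_iff.mp hid).mono nhdsWithin_le_nhds)

theorem ContinuousWithinAt.eq_of_mem_closure_image [T2Space β] (hj : ContinuousWithinAt j s a)
    (hr : Continuous r) (hrj : LeftInvOn r j s) {y : β} (hy : y ∈ closure (j '' s))
    (hya : r y = a) : y = j a := by
  have := mem_closure_iff_nhdsWithin_neBot.mp hy
  have hr_tendsto : Tendsto r (𝓝[j '' s] y) (𝓝[s] a) := by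
    refine tendsto_nhdsWithin_iff.mpr ⟨hya ▸ hr.continuousAt.mono_left nhdsWithin_le_nhds, ?_⟩
    filter_upwards [self_mem_nhdsWithin] with z ⟨x, hx, hz⟩
    rw [← hz, hrj hx]
    exact hx
  have hid : Tendsto id (𝓝[j '' s] y) (𝓝 (j a)) :=
    (hj.tendsto.comp hr_tendsto).congr' <| by
      filter_upwards [self_mem_nhdsWithin] with z ⟨x, hx, hz⟩
      simp [← hz, hrj hx]
  exact tendsto_nhds_unique (tendsto_id.mono_left nhdsWithin_le_nhds) hid

theorem continuousWithinAt_iff_unique_lift [T2Space α] [T2Space β] (hr : Continuous r)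
    (hrj : LeftInvOn r j s) (hK : IsCompact K) (hjK : MapsTo j s K)
    (hKs : K ⊆ closure (j '' s)) :
    ContinuousWithinAt j s a ↔ ∀ y ∈ K, r y = a → y = j a :=
  ⟨fun hj _ hy hya => hj.eq_of_mem_closure_image hr hrj (hKs hy) hya,
    continuousWithinAt_of_isCompact_of_unique_lift hr hrj hK hjK⟩

end LeftInverse

theorem StrongDual.norm_le_of_forall_re_le {𝕜 E : Type*} [RCLike 𝕜] [NormedAddCommGroup E]
    [NormedSpace 𝕜 E] {f : StrongDual 𝕜 E} {u : ℝ}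
    (h : ∀ x, ‖x‖ ≤ 1 → RCLike.re (f x) ≤ u) : ‖f‖ ≤ u := by
  refine ContinuousLinearMap.opNorm_le_of_unit_norm (by simpa using h 0 (by simp)) fun x hx => ?_
  set c : 𝕜 := starRingEnd 𝕜 (f x) / ‖f x‖
  have hc : ‖c‖ ≤ 1 := by
    rcases eq_or_ne (f x) 0 with h0 | h0
    · simp [c, h0]
    · simp [c, norm_div, h0]
  have hfc : f (c • x) = ‖f x‖ := by
    rw [map_smul, smul_eq_mul, div_mul_eq_mul_div, RCLike.conj_mul, sq, mul_self_div_self]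
  simpa [hfc] using h (c • x) (by rw [norm_smul, hx, mul_one]; exact hc)

theorem WeakDual.real_smul_eq_coe_smul {𝕜 F : Type*} [RCLike 𝕜] [AddCommGroup F]
    [TopologicalSpace F] [Module 𝕜 F] (a : ℝ) (ψ : WeakDual 𝕜 F) : a • ψ = (a : 𝕜) • ψ :=
  DFunLike.ext _ _ fun z => RCLike.real_smul_eq_coe_smul (K := 𝕜) a (ψ z)

theorem WeakDual.convex_image_closedBall {𝕜 E F : Type*} [RCLike 𝕜] [SeminormedAddCommGroup E]
    [NormedSpace 𝕜 E] [AddCommGroup F] [TopologicalSpace F] [Module 𝕜 F]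
    (T : E →ₗ[𝕜] WeakDual 𝕜 F) (ρ : ℝ) : Convex ℝ (T '' closedBall 0 ρ) := by
  rintro _ ⟨x, hx, rfl⟩ _ ⟨y, hy, rfl⟩ a b ha hb hab
  refine ⟨(a : 𝕜) • x + (b : 𝕜) • y, ?_, ?_⟩
  rw [mem_closedBall_zero_iff] at hx hy ⊢
  calc ‖(a : 𝕜) • x + (b : 𝕜) • y‖ ≤ a * ‖x‖ + b * ‖y‖ := by
        refine (norm_add_le _ _).trans_eq ?_
        simp [norm_smul, abs_of_nonneg ha, abs_of_nonneg hb]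
    _ ≤ a * ρ + b * ρ := by gcongr
    _ = ρ := by rw [← add_mul, hab, one_mul]
  rw [WeakDual.real_smul_eq_coe_smul, WeakDual.real_smul_eq_coe_smul, map_add, map_smul, map_smul]

theorem WeakDual.exists_forall_eq_eval {𝕜 F : Type*} [NontriviallyNormedField 𝕜] [AddCommGroup F]
    [TopologicalSpace F] [Module 𝕜 F] (f : StrongDual 𝕜 (WeakDual 𝕜 F)) :
    ∃ y : F, ∀ ψ : WeakDual 𝕜 F, f ψ = ψ y := by
  obtain ⟨y, hy⟩ := LinearMap.dualEmbedding_surjective (E := StrongDual 𝕜 F) (F := F)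
    (topDualPairing 𝕜 F) f
  exact ⟨y, fun ψ => by rw [← hy]; rfl⟩

/-- Goldstine's theorem. -/
theorem NormedSpace.closedBall_subset_closure_image_inclusionInDoubleDual
    (𝕜 E : Type*) [RCLike 𝕜] [NormedAddCommGroup E] [NormedSpace 𝕜 E] :
    WeakDual.toStrongDual ⁻¹' closedBall (0 : StrongDual 𝕜 (StrongDual 𝕜 E)) 1 ⊆
      closure ((fun x => StrongDual.toWeakDual (inclusionInDoubleDual 𝕜 E x)) ''
        closedBall 0 1) := by
  intro φ hφ
  by_contra hφC
  have : LocallyConvexSpace ℝ (WeakDual 𝕜 (StrongDual 𝕜 E)) :=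
    (WeakDual.withSeminorms 𝕜 (StrongDual 𝕜 E)).toLocallyConvexSpace
  obtain ⟨f, u, hfC, hfφ⟩ := RCLike.geometric_hahn_banach_closed_point (𝕜 := 𝕜)
    (WeakDual.convex_image_closedBall
      (StrongDual.toWeakDual.toLinearMap ∘ₗ (inclusionInDoubleDual 𝕜 E).toLinearMap) 1).closure
    isClosed_closure hφC
  obtain ⟨G, hfG⟩ := WeakDual.exists_forall_eq_eval f
  have hG : ‖G‖ ≤ u := StrongDual.norm_le_of_forall_re_le fun x hx =>
    (hfG _ ▸ hfC _ (subset_closure ⟨x, by simpa using hx, rfl⟩)).le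
  have : RCLike.re (φ G) ≤ u := calc
    RCLike.re (φ G) ≤ ‖φ G‖ := RCLike.re_le_norm _
    _ ≤ ‖WeakDual.toStrongDual φ‖ * ‖G‖ := (WeakDual.toStrongDual φ).le_opNorm G
    _ ≤ 1 * u := by
      gcongr
      exact (mem_closedBall_zero_iff (E := StrongDual 𝕜 (StrongDual 𝕜 E))).mp hφ
    _ = u := one_mul u
  exact hfφ.not_ge (hfG φ ▸ this)

theorem NormedSpace.mapsTo_inclusionInDoubleDual_closedBall
    (𝕜 E : Type*) [RCLike 𝕜] [NormedAddCommGroup E] [NormedSpace 𝕜 E] :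
    MapsTo (fun x => StrongDual.toWeakDual (inclusionInDoubleDual 𝕜 E x)) (closedBall 0 1)
      (WeakDual.toStrongDual ⁻¹' closedBall 0 1) := fun x hx =>
  (mem_closedBall_zero_iff (E := StrongDual 𝕜 (StrongDual 𝕜 E))).mpr <|
    (double_dual_bound 𝕜 E x).trans (mem_closedBall_zero_iff.mp hx)

theorem unique_norm_preserving_extension_iff_weak_weakStar_continuousAt_general
    (X : Type*) [NormedAddCommGroup X] [NormedSpace ℂ X]
    (xs : StrongDual ℂ X) :
    (∀ φ : StrongDual ℂ (StrongDual ℂ (StrongDual ℂ X)),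
        @Norm.norm _ (ContinuousLinearMap.hasOpNorm (E := StrongDual ℂ (StrongDual ℂ X))
          (σ₁₂ := RingHom.id ℂ)) φ ≤ 1 →
        (∀ x : X, φ (inclusionInDoubleDual ℂ X x) = xs x) →
        φ = inclusionInDoubleDual ℂ (StrongDual ℂ X) xs) ↔
      ContinuousWithinAt
        (fun φ : WeakDual ℂ X => toWeakSpace ℂ (StrongDual ℂ X) (WeakDual.toStrongDual φ))
        {φ : WeakDual ℂ X | ‖WeakDual.toStrongDual φ‖ ≤ 1}
        (StrongDual.toWeakDual xs) := by
  set s : Set (WeakDual ℂ X) := {φ | ‖WeakDual.toStrongDual φ‖ ≤ 1}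
  set T := fun x => StrongDual.toWeakDual (inclusionInDoubleDual ℂ (StrongDual ℂ X) x)
  set j := fun ψ => T (WeakDual.toStrongDual ψ)
  set r := fun φ : WeakDual ℂ (StrongDual ℂ (StrongDual ℂ X)) => StrongDual.toWeakDual
    (ctranspose (E := X) (F := StrongDual ℂ (StrongDual ℂ X)) (inclusionInDoubleDual ℂ X)
      (WeakDual.toStrongDual φ))
  have hr : Continuous r :=
    WeakDual.continuous_of_continuous_eval fun x => WeakDual.eval_continuous _
  have hs : WeakDual.toStrongDual '' s = closedBall 0 1 := by
    ext f
    exact ⟨fun ⟨φ, hφ, hφf⟩ => hφf ▸ mem_closedBall_zero_iff.mpr hφ,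
      fun hf => ⟨StrongDual.toWeakDual f, mem_closedBall_zero_iff.mp hf, rfl⟩⟩
  have hjK : MapsTo j s (WeakDual.toStrongDual ⁻¹' closedBall 0 1) :=
    (NormedSpace.mapsTo_inclusionInDoubleDual_closedBall ℂ (StrongDual ℂ X)).comp
      fun _ hψ => mem_closedBall_zero_iff.mpr hψ
  have hKs : WeakDual.toStrongDual ⁻¹' closedBall 0 1 ⊆ closure (j '' s) := by
    rw [show j '' s = T '' closedBall 0 1 by rw [← hs, image_image]]
    exact NormedSpace.closedBall_subset_closure_image_inclusionInDoubleDual ℂ (StrongDual ℂ X)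
  rw [(isEmbedding_inclusionInDoubleDualWeak ℂ _).isInducing.continuousWithinAt_iff]
  refine Iff.trans ?_ (continuousWithinAt_iff_unique_lift (j := j) hr (fun _ _ => rfl)
    (WeakDual.isCompact_closedBall _ 1) hjK hKs).symm
  refine ⟨fun h y hy hya => ?_, fun h φ hφ hext => ?_⟩
  · exact congrArg StrongDual.toWeakDual
      (h (WeakDual.toStrongDual y) (mem_closedBall_zero_iff.mp hy) (DFunLike.congr_fun hya))
  · exact congrArg WeakDual.toStrongDual (h (StrongDual.toWeakDual φ)
      (mem_closedBall_zero_iff.mpr hφ) (DFunLike.ext _ _ hext))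

/-- For `x* ∈ X*` of norm one, `x*` has a unique norm-preserving extension to a
functional on `X**` if and only if the identity map on the closed unit ball of `X*`, from the
relative weak-star topology to the relative weak topology, is continuous at `x*`. -/
theorem unique_norm_preserving_extension_iff_weak_weakStar_continuousAt
    (X : Type*) [NormedAddCommGroup X] [NormedSpace ℂ X] [CompleteSpace X]
    (xs : StrongDual ℂ X) (hxs : ‖xs‖ = 1) :
    (∀ φ : StrongDual ℂ (StrongDual ℂ (StrongDual ℂ X)),
        @Norm.norm _ (ContinuousLinearMap.hasOpNorm (E := StrongDual ℂ (StrongDual ℂ X))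
          (σ₁₂ := RingHom.id ℂ)) φ ≤ 1 →
        (∀ x : X, φ (inclusionInDoubleDual ℂ X x) = xs x) →
        φ = inclusionInDoubleDual ℂ (StrongDual ℂ X) xs) ↔
      ContinuousWithinAt
        (fun φ : WeakDual ℂ X => toWeakSpace ℂ (StrongDual ℂ X) (WeakDual.toStrongDual φ))
        {φ : WeakDual ℂ X | ‖WeakDual.toStrongDual φ‖ ≤ 1}
        (StrongDual.toWeakDual xs) :=
  unique_norm_preserving_extension_iff_weak_weakStar_continuousAt_general X xs
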